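/- arXiv:2409.12543 — 3 statements merged into one kernel-verified Lean document; each statement's English description precedes it below -/
import Mathlib

section
/- Let X be a reflexive real Banach space such that the unit sphere S_X contains no left-symmetric points. Let Y be a real normed linear space and T a compact linear operator from X to Y with operator norm 1 such that M_T = {x₀, −x₀} for some unit vector x₀ ∈ X. If T is left orthogonality preserving at x₀, then T is not a right-symmetric point of the space of compact operators from X to Y (with the operator norm). -/
/-- Birkhoff–James orthogonality: `x ⊥_B y` iff `‖x + λ • y‖ ≥ ‖x‖` for every real `λ`. -/
def BJOrth {E : Type*} [NormedAddCommGroup E] [NormedSpace ℝ E] (x y : E) : Prop :=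
  ∀ lam : ℝ, ‖x‖ ≤ ‖x + lam • y‖

/-- `x` is a left-symmetric point: `x ⊥_B y` implies `y ⊥_B x` for all `y`. -/
def LeftSymmetricPt {E : Type*} [NormedAddCommGroup E] [NormedSpace ℝ E] (x : E) : Prop :=
  ∀ y : E, BJOrth x y → BJOrth y x

/-- `x` is a right-symmetric point: `y ⊥_B x` implies `x ⊥_B y` for all `y`. -/
def RightSymmetricPt {E : Type*} [NormedAddCommGroup E] [NormedSpace ℝ E] (x : E) : Prop :=
  ∀ y : E, BJOrth y x → BJOrth x y

/-- A nonzero `x` is a smooth point if there is exactly one norm-one continuous linear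
functional `f` with `f x = ‖x‖`. -/
def SmoothPoint {E : Type*} [NormedAddCommGroup E] [NormedSpace ℝ E] (x : E) : Prop :=
  ∃! f : E →L[ℝ] ℝ, ‖f‖ = 1 ∧ f x = ‖x‖

/-- A normed space is reflexive if the canonical embedding into the double dual is onto. -/
def ReflexiveSpace (E : Type*) [NormedAddCommGroup E] [NormedSpace ℝ E] : Prop :=
  Function.Surjective (NormedSpace.inclusionInDoubleDual ℝ E)

/-- `T` (a compact operator) is a right-symmetric point of the space of compact operators
(with the operator norm): `A ⊥_B T` implies `T ⊥_B A` for every compact operator `A`. -/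
def RightSymmetricCompactOp {X Y : Type*} [NormedAddCommGroup X] [NormedSpace ℝ X]
    [NormedAddCommGroup Y] [NormedSpace ℝ Y] (T : X →L[ℝ] Y) : Prop :=
  ∀ A : X →L[ℝ] Y, IsCompactOperator A → BJOrth A T → BJOrth T A

/-- `T` is left orthogonality preserving at `x`: `x ⊥_B y` implies `T x ⊥_B T y`. -/
def LeftOPAt {X Y : Type*} [NormedAddCommGroup X] [NormedSpace ℝ X]
    [NormedAddCommGroup Y] [NormedSpace ℝ Y] (T : X →L[ℝ] Y) (x : X) : Prop :=
  ∀ y : X, BJOrth x y → BJOrth (T x) (T y)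

/-- Approximate Birkhoff–James orthogonality in the sense of Dragomir–Chmieliński:
`x ⊥_D^ε y` iff `‖x + λ • y‖ ≥ √(1 - ε²) * ‖x‖` for every real `λ`. -/
def ApproxOrthD {E : Type*} [NormedAddCommGroup E] [NormedSpace ℝ E]
    (ε : ℝ) (x y : E) : Prop :=
  ∀ lam : ℝ, Real.sqrt (1 - ε ^ 2) * ‖x‖ ≤ ‖x + lam • y‖

/-- Approximate Birkhoff–James orthogonality in the sense of Chmieliński:
`x ⊥_B^ε y` iff `‖x + λ • y‖² ≥ ‖x‖² - 2ε‖x‖‖λ • y‖` for every real `λ`. -/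
def ApproxOrthC {E : Type*} [NormedAddCommGroup E] [NormedSpace ℝ E]
    (ε : ℝ) (x y : E) : Prop :=
  ∀ lam : ℝ, ‖x‖ ^ 2 - 2 * ε * ‖x‖ * ‖lam • y‖ ≤ ‖x + lam • y‖ ^ 2

/-!
Suppose `T` were right-symmetric. Since `x₀` is not left-symmetric there is `y` with `x₀ ⊥ y`
but not `y ⊥ x₀`; a norming functional `f` of `y` then has `f x₀ ≠ 0`. The rank-one operator
`A = f ⊗ T x₀` satisfies `A ⊥ T` because `T` preserves `x₀ ⊥ y`, so `T ⊥ A`. For compact operators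
on a reflexive space, `‖T + t A‖ ≥ ‖T‖` for `t > 0` passes, through weak limits of almost norming
vectors of `T + t A` as `t → 0⁺`, to `‖T x + l A x‖ ≥ ‖T‖` for all `l ≥ 0` at some norm-attaining
`x`. As `M_T = {±x₀}`, applying this to `A` and `-A` gives `T x₀ ⊥ f(x₀) T x₀`, which is absurd
because `T x₀ ≠ 0`.
-/

open Filter Metric NormedSpace Topology

section BirkhoffJames

variable {E : Type*} [NormedAddCommGroup E] [NormedSpace ℝ E]

theorem BJOrth.smul_left {x y : E} (h : BJOrth x y) (a : ℝ) : BJOrth (a • x) y := by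
  intro lam
  rcases eq_or_ne a 0 with rfl | ha
  · simp
  have hxy : a • x + lam • y = a • (x + (lam / a) • y) := by
    rw [smul_add, smul_smul, mul_div_cancel₀ lam ha]
  rw [hxy, norm_smul, norm_smul]
  exact mul_le_mul_of_nonneg_left (h _) (norm_nonneg a)

theorem BJOrth.of_norm_le_one_of_apply_eq_norm {x y : E} {f : StrongDual ℝ E} (hf : ‖f‖ ≤ 1)
    (hfx : f x = ‖x‖) (hfy : f y = 0) : BJOrth x y := fun lam =>
  calc ‖x‖ = f (x + lam • y) := by simp [hfx, hfy]
    _ ≤ ‖f (x + lam • y)‖ := Real.le_norm_self _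
    _ ≤ ‖x + lam • y‖ := by simpa using f.le_of_opNorm_le hf (x + lam • y)

theorem BJOrth.eq_zero_of_smul_self {x : E} {c : ℝ} (h : BJOrth x (c • x)) (hc : c ≠ 0) :
    x = 0 := by
  have h0 := h (-c⁻¹)
  rwa [smul_smul, neg_mul, inv_mul_cancel₀ hc, neg_one_smul, add_neg_cancel, norm_zero,
    norm_le_zero_iff] at h0

theorem sub_mul_le_norm_add_smul {a b : E} {M t l : ℝ} (ha : ‖a‖ ≤ M) (ht : 0 < t)
    (htl : t ≤ l) (h : M - t ^ 2 ≤ ‖a + t • b‖) : M - t * l ≤ ‖a + l • b‖ := by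
  have hsplit : l • (a + t • b) = (l - t) • a + t • (a + l • b) := by
    simp only [smul_add, smul_smul, sub_smul, mul_comm l t]; abel
  have hconv : l * ‖a + t • b‖ ≤ (l - t) * M + t * ‖a + l • b‖ := by
    calc l * ‖a + t • b‖ = ‖l • (a + t • b)‖ := by
          rw [norm_smul, Real.norm_of_nonneg (ht.le.trans htl)]
      _ ≤ (l - t) * ‖a‖ + t * ‖a + l • b‖ := by
          rw [hsplit]
          refine (norm_add_le _ _).trans_eq ?_
          rw [norm_smul, norm_smul, Real.norm_of_nonneg (sub_nonneg.2 htl),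
            Real.norm_of_nonneg ht.le]
      _ ≤ (l - t) * M + t * ‖a + l • b‖ := by gcongr
  nlinarith

theorem le_norm_of_forall_pos_le_norm_add_smul {a b : E} {M : ℝ}
    (h : ∀ l : ℝ, 0 < l → M ≤ ‖a + l • b‖) : M ≤ ‖a‖ := by
  have hlim : Tendsto (fun l : ℝ => ‖a + l • b‖) (𝓝[>] 0) (𝓝 ‖a‖) := by
    have hcont : Continuous fun l : ℝ => ‖a + l • b‖ := by fun_prop
    simpa using (hcont.tendsto 0).mono_left nhdsWithin_le_nhds
  exact ge_of_tendsto hlim (eventually_nhdsWithin_of_forall h)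

end BirkhoffJames

section Operators

variable {X Y : Type*} [NormedAddCommGroup X] [NormedSpace ℝ X]
  [NormedAddCommGroup Y] [NormedSpace ℝ Y]

theorem ReflexiveSpace.isCompact_toWeakSpace_closedBall (hX : ReflexiveSpace X) (x : X)
    (r : ℝ) : IsCompact (toWeakSpace ℝ X '' closedBall x r) := by
  rw [← isClosed_closedBall.closure_eq, (convex_closedBall x r).toWeakSpace_closure ℝ]
  refine isCompact_closure_of_isBounded ℝ X _ ?_ fun φ _ => ?_
  · simpa [Set.preimage_image_eq _ (toWeakSpace ℝ X).injective] using isBounded_closedBall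
  · obtain ⟨z, hz⟩ := hX (StrongDual.toWeakDual.symm φ)
    refine ⟨toWeakSpace ℝ X z, DFunLike.ext _ _ fun g => ?_⟩
    exact DFunLike.congr_fun hz g

theorem IsCompactOperator.tendsto_apply_of_tendsto_toWeakSpace {ι : Type*} {F : Filter ι}
    {T : X →L[ℝ] Y} (hT : IsCompactOperator T) {u : ι → X} {r : ℝ} (hu : ∀ i, ‖u i‖ ≤ r)
    {x : X} (hux : Tendsto (fun i => toWeakSpace ℝ X (u i)) F (𝓝 (toWeakSpace ℝ X x))) :
    Tendsto (fun i => T (u i)) F (𝓝 (T x)) := by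
  obtain ⟨K, hK, hTK⟩ :=
    hT.image_subset_compact_of_bounded (isBounded_closedBall (x := 0) (r := r))
  refine hK.tendsto_nhds_of_unique_mapClusterPt
    (Eventually.of_forall fun i => hTK ⟨u i, by simpa using hu i, rfl⟩) fun y _ hy => ?_
  obtain ⟨U, hUF, hUy⟩ := mapClusterPt_iff_ultrafilter.1 hy
  refine SeparatingDual.eq_iff_forall_dual_eq.2 fun g =>
    tendsto_nhds_unique (((g : Y →L[ℝ] ℝ).continuous.tendsto y).comp hUy) ?_
  have hweak := (WeakBilin.eval_continuous (topDualPairing ℝ X).flip (g.comp T)).tendsto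
    (toWeakSpace ℝ X x)
  exact (hweak.comp hux).mono_left hUF

theorem IsCompactOperator.exists_norm_le_one_forall_nonneg_le_norm_add_smul
    (hX : ReflexiveSpace X) {T A : X →L[ℝ] Y} (hT : IsCompactOperator T)
    (hA : IsCompactOperator A) (h : ∀ t : ℝ, 0 < t → ‖T‖ ≤ ‖T + t • A‖) :
    ∃ x : X, ‖x‖ ≤ 1 ∧ ∀ l : ℝ, 0 ≤ l → ‖T‖ ≤ ‖T x + l • A x‖ := by
  set t : ℕ → ℝ := fun n => 1 / (n + 1)
  have ht : ∀ n, 0 < t n := fun n => Nat.one_div_pos_of_nat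
  have htlim : Tendsto t atTop (𝓝 0) := tendsto_one_div_add_atTop_nhds_zero_nat
  -- The defect `t ^ 2` is `o(t)`, so it disappears after the division by `t` hidden in
  -- `sub_mul_le_norm_add_smul`.
  have hnear : ∀ n, ∃ u : X, ‖u‖ ≤ 1 ∧ ‖T‖ - t n ^ 2 ≤ ‖T u + t n • A u‖ := fun n => by
    obtain ⟨u, hu, hlt⟩ :=
      (T + t n • A).exists_lt_apply_of_lt_opNorm (sub_lt_self _ (pow_pos (ht n) 2))
    refine ⟨u, hu.le, ?_⟩
    simp only [add_apply, smul_apply] at hlt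
    linarith [h _ (ht n)]
  choose u hu hnorm using hnear
  have hmaps :
      Tendsto (fun n => toWeakSpace ℝ X (u n)) atTop (𝓟 (toWeakSpace ℝ X '' closedBall 0 1)) :=
    tendsto_principal.2 <| .of_forall fun n => ⟨u n, by simpa using hu n, rfl⟩
  obtain ⟨_, ⟨x, hx, rfl⟩, hcl⟩ :=
    (hX.isCompact_toWeakSpace_closedBall 0 1).exists_mapClusterPt hmaps
  obtain ⟨U, hUtop, hUx⟩ := mapClusterPt_iff_ultrafilter.1 hcl
  have hTx := hT.tendsto_apply_of_tendsto_toWeakSpace hu hUx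
  have hAx := hA.tendsto_apply_of_tendsto_toWeakSpace hu hUx
  have hpos : ∀ l : ℝ, 0 < l → ‖T‖ ≤ ‖T x + l • A x‖ := by
    intro l hl
    have hlim : Tendsto (fun n => ‖T‖ - t n * l) U (𝓝 ‖T‖) := by
      simpa using ((htlim.mono_left hUtop).mul_const l).const_sub ‖T‖
    refine le_of_tendsto_of_tendsto hlim (hTx.add (hAx.const_smul l)).norm ?_
    filter_upwards [(htlim.eventually (gt_mem_nhds hl)).filter_mono hUtop] with n hn
    exact sub_mul_le_norm_add_smul (T.unit_le_opNorm _ (hu n)) (ht n) hn.le (hnorm n)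
  refine ⟨x, by simpa using hx, fun l hl => ?_⟩
  rcases hl.eq_or_lt with rfl | hl
  · simpa using le_norm_of_forall_pos_le_norm_add_smul hpos
  · exact hpos l hl

theorem norm_apply_le_norm_add_smul_of_normAttain_eq_pair (hX : ReflexiveSpace X)
    {T A : X →L[ℝ] Y} (hT : IsCompactOperator T) (hA : IsCompactOperator A) (hT0 : T ≠ 0)
    {x₀ : X} (hMT : {x : X | ‖x‖ = 1 ∧ ‖T x‖ = ‖T‖} = {x₀, -x₀})
    (h : ∀ t : ℝ, 0 < t → ‖T‖ ≤ ‖T + t • A‖) {l : ℝ} (hl : 0 ≤ l) :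
    ‖T x₀‖ ≤ ‖T x₀ + l • A x₀‖ := by
  obtain ⟨x, hx1, hx⟩ := hT.exists_norm_le_one_forall_nonneg_le_norm_add_smul hX hA h
  have hTx : ‖T‖ ≤ ‖T x‖ := by simpa using hx 0 le_rfl
  have hxM : x ∈ {x : X | ‖x‖ = 1 ∧ ‖T x‖ = ‖T‖} := by
    refine ⟨le_antisymm hx1 ?_, le_antisymm (T.unit_le_opNorm x hx1) hTx⟩
    have hTpos : 0 < ‖T‖ := norm_pos_iff.2 hT0
    nlinarith [T.le_opNorm x]
  have hx₀M : x₀ ∈ {x : X | ‖x‖ = 1 ∧ ‖T x‖ = ‖T‖} := by simp [hMT]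
  rw [hx₀M.2]
  rw [hMT] at hxM
  rcases hxM with rfl | rfl
  · exact hx l hl
  · simpa only [map_neg, smul_neg, ← neg_add, norm_neg] using hx l hl

theorem BJOrth.apply_of_normAttain_eq_pair (hX : ReflexiveSpace X) {T A : X →L[ℝ] Y}
    (hT : IsCompactOperator T) (hA : IsCompactOperator A) (hT0 : T ≠ 0) {x₀ : X}
    (hMT : {x : X | ‖x‖ = 1 ∧ ‖T x‖ = ‖T‖} = {x₀, -x₀}) (hTA : BJOrth T A) :
    BJOrth (T x₀) (A x₀) := by
  intro l
  rcases le_total 0 l with hl | hl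
  · exact norm_apply_le_norm_add_smul_of_normAttain_eq_pair hX hT hA hT0 hMT
      (fun t _ => hTA t) hl
  · simpa using norm_apply_le_norm_add_smul_of_normAttain_eq_pair hX hT hA.neg hT0 hMT
      (A := -A) (fun t _ => by simpa using hTA (-t)) (neg_nonneg.2 hl)

theorem isCompactOperator_smulRight (f : StrongDual ℝ X) (v : Y) :
    IsCompactOperator (f.smulRight v) :=
  (isCompactOperator_of_locallyCompactSpace_dom f).continuous_comp
    (continuous_id.smul continuous_const : Continuous fun c : ℝ => c • v)

theorem bjOrth_smulRight_of_bjOrth_apply {T : X →L[ℝ] Y} {x₀ y : X} (hy : y ≠ 0)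
    {f : StrongDual ℝ X} (hf : ‖f‖ ≤ 1) (hfy : f y = ‖y‖) (h : BJOrth (T x₀) (T y)) :
    BJOrth (f.smulRight (T x₀)) T := by
  intro lam
  have hy' : 0 < ‖y‖ := norm_pos_iff.2 hy
  have happly : (f.smulRight (T x₀) + lam • T) y = ‖y‖ • T x₀ + lam • T y := by
    simp [hfy]
  refine le_of_mul_le_mul_right ?_ hy'
  calc ‖f.smulRight (T x₀)‖ * ‖y‖ ≤ ‖T x₀‖ * ‖y‖ := by
        rw [ContinuousLinearMap.norm_smulRight_apply]
        gcongr
        exact mul_le_of_le_one_left (norm_nonneg _) hf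
    _ = ‖‖y‖ • T x₀‖ := by rw [norm_smul, norm_norm, mul_comm]
    _ ≤ ‖‖y‖ • T x₀ + lam • T y‖ := h.smul_left ‖y‖ lam
    _ = ‖(f.smulRight (T x₀) + lam • T) y‖ := by rw [happly]
    _ ≤ ‖f.smulRight (T x₀) + lam • T‖ * ‖y‖ := ContinuousLinearMap.le_opNorm _ _

end Operators

theorem not_rightSymmetric_of_no_leftSymmetric_general {X Y : Type*}
    [NormedAddCommGroup X] [NormedSpace ℝ X]
    [NormedAddCommGroup Y] [NormedSpace ℝ Y]
    (hX : ReflexiveSpace X)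
    (hnols : ∀ x : X, ‖x‖ = 1 → ¬ LeftSymmetricPt x)
    (T : X →L[ℝ] Y) (hTc : IsCompactOperator T) (hT : ‖T‖ = 1)
    (x₀ : X) (hx₀ : ‖x₀‖ = 1)
    (hMT : {x : X | ‖x‖ = 1 ∧ ‖T x‖ = ‖T‖} = {x₀, -x₀})
    (hop : LeftOPAt T x₀) :
    ¬ RightSymmetricCompactOp T := by
  intro hrs
  obtain ⟨y, hx₀y, hyx₀⟩ : ∃ y, BJOrth x₀ y ∧ ¬ BJOrth y x₀ := by
    simpa [LeftSymmetricPt] using hnols x₀ hx₀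
  have hy : y ≠ 0 := by
    rintro rfl
    exact hyx₀ fun lam => by simp
  obtain ⟨f, hf, hfy⟩ := exists_dual_vector'' ℝ y
  have hfx₀ : f x₀ ≠ 0 := fun h0 => hyx₀ (.of_norm_le_one_of_apply_eq_norm hf hfy h0)
  have hT0 : T ≠ 0 := by
    rintro rfl
    simp at hT
  have hTx₀ : T x₀ ≠ 0 := by
    have hx₀M : x₀ ∈ {x : X | ‖x‖ = 1 ∧ ‖T x‖ = ‖T‖} := by simp [hMT]
    rw [← norm_ne_zero_iff, hx₀M.2, hT]
    exact one_ne_zero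
  have hAT : BJOrth (f.smulRight (T x₀)) T :=
    bjOrth_smulRight_of_bjOrth_apply hy hf hfy (hop y hx₀y)
  have hTA : BJOrth T (f.smulRight (T x₀)) := hrs _ (isCompactOperator_smulRight f _) hAT
  have hTAx₀ : BJOrth (T x₀) (f x₀ • T x₀) :=
    hTA.apply_of_normAttain_eq_pair hX hTc (isCompactOperator_smulRight f _) hT0 hMT
  exact hTx₀ (hTAx₀.eq_zero_of_smul_self hfx₀)

/-- If the unit sphere of a reflexive Banach space `X` contains no left-symmetric
points, `T : X → Y` is a norm-one compact operator with `M_T = {x₀, -x₀}`, and `T` is left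
orthogonality preserving at `x₀`, then `T` is not a right-symmetric point of the space of
compact operators from `X` to `Y`. -/
theorem not_rightSymmetric_of_no_leftSymmetric {X Y : Type*}
    [NormedAddCommGroup X] [NormedSpace ℝ X] [CompleteSpace X]
    [NormedAddCommGroup Y] [NormedSpace ℝ Y]
    (hX : ReflexiveSpace X)
    (hnols : ∀ x : X, ‖x‖ = 1 → ¬ LeftSymmetricPt x)
    (T : X →L[ℝ] Y) (hTc : IsCompactOperator T) (hT : ‖T‖ = 1)
    (x₀ : X) (hx₀ : ‖x₀‖ = 1)
    (hMT : {x : X | ‖x‖ = 1 ∧ ‖T x‖ = ‖T‖} = {x₀, -x₀})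
    (hop : LeftOPAt T x₀) :
    ¬ RightSymmetricCompactOp T :=
  not_rightSymmetric_of_no_leftSymmetric_general hX hnols T hTc hT x₀ hx₀ hMT hop
end

section
/- Let X be a smooth reflexive real Banach space and T a compact linear operator from X to X with operator norm 1 such that M_T = {x₀, −x₀} for some unit vector x₀ ∈ X. If T is a right-symmetric point of the space of compact operators on X (with the operator norm), then x₀ is a left-symmetric point of X. -/
open Filter Topology

section BirkhoffJames

variable {E F : Type*} [NormedAddCommGroup E] [NormedSpace ℝ E]
  [NormedAddCommGroup F] [NormedSpace ℝ F]

theorem bjOrth_zero_left (v : E) : BJOrth 0 v := fun lam => by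
  simp

theorem bjOrth_of_dual {f : StrongDual ℝ E} {u v : E} (hf : ‖f‖ ≤ 1) (hfu : f u = ‖u‖)
    (hfv : f v = 0) : BJOrth u v := fun lam =>
  calc ‖u‖ = f (u + lam • v) := by simp [hfu, hfv]
    _ ≤ ‖f‖ * ‖u + lam • v‖ := (le_abs_self _).trans (f.le_opNorm _)
    _ ≤ ‖u + lam • v‖ := mul_le_of_le_one_left (norm_nonneg _) hf

theorem BJOrth.exists_dual {u v : E} (h : BJOrth u v) :
    ∃ f : StrongDual ℝ E, ‖f‖ ≤ 1 ∧ f u = ‖u‖ ∧ f v = 0 := by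
  -- `u ⊥ v` says that `u` keeps its norm in `E ⧸ ℝ ∙ v`; pull back a norming functional from there.
  set W := ℝ ∙ v
  have hmk : ‖(Submodule.Quotient.mk u : E ⧸ W)‖ = ‖u‖ := by
    refine le_antisymm (Submodule.Quotient.norm_mk_le W u) (QuotientAddGroup.le_norm_iff.2 ?_)
    intro m hm
    obtain ⟨c, hc⟩ := Submodule.mem_span_singleton.1 ((Submodule.Quotient.eq W).1 hm)
    simpa [eq_sub_iff_add_eq'.1 hc] using h c
  obtain ⟨g, hg, hgu⟩ := exists_dual_vector'' ℝ (Submodule.Quotient.mk u : E ⧸ W)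
  refine ⟨g.comp W.mkQL, ?_, by simpa [hmk] using hgu, ?_⟩
  · refine ContinuousLinearMap.opNorm_le_bound _ zero_le_one fun x => ?_
    calc ‖g (W.mkQ x)‖ ≤ ‖g‖ * ‖(Submodule.Quotient.mk x : E ⧸ W)‖ := g.le_opNorm _
      _ ≤ 1 * ‖x‖ := mul_le_mul hg (Submodule.Quotient.norm_mk_le W x) (norm_nonneg _) zero_le_one
  · simp [(Submodule.Quotient.mk_eq_zero W).2 (Submodule.mem_span_singleton_self v)]

theorem BJOrth.smul_left_s7 {u v : E} (h : BJOrth u v) (c : ℝ) : BJOrth (c • u) v := by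
  rcases eq_or_ne c 0 with rfl | hc
  · simpa using bjOrth_zero_left v
  intro lam
  have : c • u + lam • v = c • (u + (lam / c) • v) := by
    rw [smul_add, smul_smul, mul_div_cancel₀ lam hc]
  rw [this, norm_smul, norm_smul]
  exact mul_le_mul_of_nonneg_left (h _) (norm_nonneg c)

theorem eq_zero_of_bjOrth_smul_self {u : E} {c : ℝ} (hc : c ≠ 0) (h : BJOrth u (c • u)) :
    u = 0 := by
  simpa [smul_smul, hc] using h (-c⁻¹)

theorem norm_eq_one_of_apply_eq_norm {f : StrongDual ℝ E} {u : E} (hu : u ≠ 0) (hf : ‖f‖ ≤ 1)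
    (hfu : f u = ‖u‖) : ‖f‖ = 1 := by
  refine le_antisymm hf (le_of_mul_le_mul_right ?_ (norm_pos_iff.2 hu))
  calc 1 * ‖u‖ = ‖f u‖ := by simp [hfu]
    _ ≤ ‖f‖ * ‖u‖ := f.le_opNorm u

theorem SmoothPoint.apply_eq_zero_of_bjOrth {u v : E} (hu : SmoothPoint u) (hu0 : u ≠ 0)
    (huv : BJOrth u v) {f : StrongDual ℝ E} (hf : ‖f‖ ≤ 1) (hfu : f u = ‖u‖) : f v = 0 := by
  obtain ⟨g, hg, hgu, hgv⟩ := huv.exists_dual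
  rw [hu.unique ⟨norm_eq_one_of_apply_eq_norm hu0 hf hfu, hfu⟩
    ⟨norm_eq_one_of_apply_eq_norm hu0 hg hgu, hgu⟩, hgv]

theorem BJOrth.map_of_smoothPoint {x y : E} (h : BJOrth x y) (hx : SmoothPoint x) (T : E →L[ℝ] F)
    (hT : ‖T‖ ≤ 1) (hTx : ‖T x‖ = ‖x‖) : BJOrth (T x) (T y) := by
  rcases eq_or_ne x 0 with rfl | hx0
  · simpa using bjOrth_zero_left (T y)
  obtain ⟨g, hg, hgTx⟩ := exists_dual_vector'' ℝ (T x)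
  have hgT : ‖g.comp T‖ ≤ 1 :=
    (g.opNorm_comp_le T).trans (mul_le_one₀ hg (norm_nonneg T) hT)
  exact bjOrth_of_dual hg hgTx
    (hx.apply_eq_zero_of_bjOrth hx0 h hgT (by simpa [hTx] using hgTx))

theorem bjOrth_of_bjOrth_apply {A T : E →L[ℝ] F} {y : E} (hy : y ≠ 0) (hAy : ‖A y‖ = ‖A‖ * ‖y‖)
    (h : BJOrth (A y) (T y)) : BJOrth A T := by
  intro lam
  refine le_of_mul_le_mul_right ?_ (norm_pos_iff.2 hy)
  calc ‖A‖ * ‖y‖ ≤ ‖A y + lam • T y‖ := hAy ▸ h lam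
    _ = ‖(A + lam • T) y‖ := rfl
    _ ≤ ‖A + lam • T‖ * ‖y‖ := (A + lam • T).le_opNorm y

theorem isCompactOperator_smulRight_s7 (g : StrongDual ℝ E) (w : F) :
    IsCompactOperator (g.smulRight w) :=
  (isCompactOperator_of_locallyCompactSpace_dom g).continuous_comp
    (continuous_id.smul continuous_const)

theorem mul_norm_add_smul_le (u v : E) {s t : ℝ} (hs : 0 ≤ s) (hst : s ≤ t) :
    t * ‖u + s • v‖ ≤ s * ‖u + t • v‖ + (t - s) * ‖u‖ := by
  have ht : 0 ≤ t := hs.trans hst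
  have hts : 0 ≤ t - s := sub_nonneg.2 hst
  calc t * ‖u + s • v‖ = ‖t • (u + s • v)‖ := by rw [norm_smul, Real.norm_of_nonneg ht]
    _ = ‖s • (u + t • v) + (t - s) • u‖ := by congr 1; module
    _ ≤ s * ‖u + t • v‖ + (t - s) * ‖u‖ := by
        refine (norm_add_le _ _).trans_eq ?_
        rw [norm_smul, norm_smul, Real.norm_of_nonneg hs, Real.norm_of_nonneg hts]

end BirkhoffJames

section Reflexive

variable {E F ι : Type*} [NormedAddCommGroup E] [NormedSpace ℝ E]
  [NormedAddCommGroup F] [NormedSpace ℝ F]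

theorem ReflexiveSpace.exists_tendsto_dual (hE : ReflexiveSpace E) (U : Ultrafilter ι)
    {x : ι → E} {r : ℝ} (hx : ∀ i, ‖x i‖ ≤ r) :
    ∃ z : E, ‖z‖ ≤ r ∧ ∀ f : StrongDual ℝ E, Tendsto (fun i => f (x i)) U (𝓝 (f z)) := by
  let J := NormedSpace.inclusionInDoubleDual ℝ E
  let w : ι → WeakDual ℝ (StrongDual ℝ E) := fun i => StrongDual.toWeakDual (J (x i))
  have hw : ∀ i, w i ∈ WeakDual.toStrongDual ⁻¹' Metric.closedBall 0 r := fun i => by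
    rw [Set.mem_preimage, Metric.mem_closedBall]
    exact (dist_zero_right (J (x i))).le.trans
      ((NormedSpace.double_dual_bound ℝ E (x i)).trans (hx i))
  obtain ⟨Φ, hΦ, hwΦ⟩ := (WeakDual.isCompact_closedBall 0 r).ultrafilter_le_nhds
    (U.map w) (le_principal_iff.2 (mem_map.2 (Eventually.of_forall hw)))
  obtain ⟨z, hz⟩ := hE (WeakDual.toStrongDual Φ)
  refine ⟨z, ?_, fun f => ?_⟩
  · have hJz : ‖J z‖ = ‖z‖ := (NormedSpace.inclusionInDoubleDualLi ℝ).norm_map z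
    simpa [← hJz, J, hz] using hΦ
  · have hΦz : Φ f = f z := by
      change WeakDual.toStrongDual Φ f = f z
      rw [← hz]
      rfl
    exact hΦz ▸ ((WeakDual.eval_continuous f).tendsto Φ).comp hwΦ

theorem IsCompactOperator.tendsto_of_tendsto_dual {S : E →L[ℝ] F} (hS : IsCompactOperator S)
    {U : Ultrafilter ι} {x : ι → E} {r : ℝ} (hx : ∀ i, ‖x i‖ ≤ r) {z : E}
    (hz : ∀ f : StrongDual ℝ E, Tendsto (fun i => f (x i)) U (𝓝 (f z))) :
    Tendsto (fun i => S (x i)) U (𝓝 (S z)) := by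
  obtain ⟨K, hK, hSK⟩ := hS.image_closedBall_subset_compact (f := (S : E →ₗ[ℝ] F)) r
  have hxK : ∀ i, S (x i) ∈ K := fun i => hSK ⟨x i, by simpa using hx i, rfl⟩
  obtain ⟨p, -, hp⟩ := hK.ultrafilter_le_nhds (U.map fun i => S (x i))
    (le_principal_iff.2 (mem_map.2 (Eventually.of_forall hxK)))
  have hpz : p = S z := SeparatingDual.eq_iff_forall_dual_eq.2 fun g =>
    tendsto_nhds_unique ((g.continuous.tendsto p).comp hp) (hz (g.comp S))
  exact hpz ▸ hp

theorem exists_normAttain_le_norm_add_smul (hE : ReflexiveSpace E) {T A : E →L[ℝ] F}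
    (hTc : IsCompactOperator T) (hAc : IsCompactOperator A) (hT0 : T ≠ 0) (hTA : BJOrth T A)
    {t : ℝ} (ht : 0 < t) : ∃ z : E, ‖z‖ = 1 ∧ ‖T z‖ = ‖T‖ ∧ ‖T‖ ≤ ‖T z + t • A z‖ := by
  set s : ℕ → ℝ := fun n => 1 / (n + 1)
  have hs : ∀ n, 0 < s n := fun n => by positivity
  have hx : ∀ n, ∃ x : E, ‖x‖ ≤ 1 ∧ ‖T‖ - s n ^ 2 ≤ ‖T x + s n • A x‖ := fun n => by
    obtain ⟨x, hx1, hx⟩ := (T + s n • A).exists_lt_apply_of_lt_opNorm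
      (r := ‖T‖ - s n ^ 2) (by linarith [hTA (s n), pow_pos (hs n) 2])
    exact ⟨x, hx1.le, hx.le⟩
  choose x hx1 hx using hx
  let U := Ultrafilter.of (atTop : Filter ℕ)
  have hsU : Tendsto s U (𝓝 0) :=
    tendsto_one_div_add_atTop_nhds_zero_nat.mono_left (Ultrafilter.of_le _)
  obtain ⟨z, hz1, hz⟩ := hE.exists_tendsto_dual U hx1
  have hTz := hTc.tendsto_of_tendsto_dual hx1 hz
  have hAz := hAc.tendsto_of_tendsto_dual hx1 hz
  have hTz_ge : ‖T‖ ≤ ‖T z‖ := by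
    have h1 : Tendsto (fun n => ‖T‖ - s n ^ 2) U (𝓝 ‖T‖) := by
      simpa using tendsto_const_nhds.sub (hsU.pow 2)
    have h2 : Tendsto (fun n => ‖T (x n) + s n • A (x n)‖) U (𝓝 ‖T z‖) := by
      simpa using (hTz.add (hsU.smul hAz)).norm
    exact le_of_tendsto_of_tendsto' h1 h2 hx
  have hTz_le : ‖T z‖ ≤ ‖T‖ := (T.le_opNorm z).trans (mul_le_of_le_one_right (norm_nonneg T) hz1)
  have hz : ‖z‖ = 1 := by
    refine le_antisymm hz1 (le_of_mul_le_mul_left ?_ (norm_pos_iff.2 hT0))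
    simpa using hTz_ge.trans (T.le_opNorm z)
  have hev : ∀ᶠ n in (U : Filter ℕ), ‖T‖ - t * s n ≤ ‖T (x n) + t • A (x n)‖ := by
    filter_upwards [hsU.eventually_le_const ht] with n hn
    -- convexity of `r ↦ ‖T xₙ + r • A xₙ‖` carries the estimate at `r = sₙ` out to `r = t`
    have hconv := mul_norm_add_smul_le (T (x n)) (A (x n)) (hs n).le hn
    have hTx : ‖T (x n)‖ ≤ ‖T‖ :=
      (T.le_opNorm _).trans (mul_le_of_le_one_right (norm_nonneg T) (hx1 n))
    nlinarith [hx n, hs n]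
  have hlim : Tendsto (fun n => ‖T‖ - t * s n) U (𝓝 ‖T‖) := by
    simpa using tendsto_const_nhds.sub (hsU.const_mul t)
  exact ⟨z, hz, le_antisymm hTz_le hTz_ge,
    le_of_tendsto_of_tendsto hlim (hTz.add (hAz.const_smul t)).norm hev⟩

theorem bjOrth_apply_of_normAttain_eq_pair (hE : ReflexiveSpace E) {T A : E →L[ℝ] F}
    (hTc : IsCompactOperator T) (hAc : IsCompactOperator A) {x₀ : E}
    (hMT : {x : E | ‖x‖ = 1 ∧ ‖T x‖ = ‖T‖} = {x₀, -x₀}) (hTA : BJOrth T A) :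
    BJOrth (T x₀) (A x₀) := by
  rcases eq_or_ne T 0 with rfl | hT0
  · simpa using bjOrth_zero_left (A x₀)
  have hx₀ : x₀ ∈ {x : E | ‖x‖ = 1 ∧ ‖T x‖ = ‖T‖} := hMT ▸ Set.mem_insert x₀ _
  have key : ∀ B : E →L[ℝ] F, IsCompactOperator B → BJOrth T B →
      ∀ t : ℝ, 0 < t → ‖T x₀‖ ≤ ‖T x₀ + t • B x₀‖ := by
    intro B hBc hTB t ht
    obtain ⟨z, hz1, hTz, hz⟩ := exists_normAttain_le_norm_add_smul hE hTc hBc hT0 hTB ht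
    have hz₀ : z ∈ ({x₀, -x₀} : Set E) := hMT ▸ ⟨hz1, hTz⟩
    rcases hz₀ with rfl | rfl
    · rwa [hTz]
    · rwa [map_neg, map_neg, smul_neg, ← neg_add, norm_neg, ← hx₀.2] at hz
  intro lam
  rcases lt_trichotomy lam 0 with hlam | rfl | hlam
  · have hTnA : BJOrth T (-A) := fun μ => by simpa using hTA (-μ)
    simpa using key (-A) (by simpa using hAc.neg) hTnA (-lam) (neg_pos.2 hlam)
  · simp
  · exact key A hAc hTA lam hlam

end Reflexive

theorem leftSymmetric_of_rightSymmetric_smooth_general {X : Type*}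
    [NormedAddCommGroup X] [NormedSpace ℝ X]
    (hX : ReflexiveSpace X)
    (hsmooth : ∀ x : X, x ≠ 0 → SmoothPoint x)
    (T : X →L[ℝ] X) (hTc : IsCompactOperator T) (hT : ‖T‖ = 1)
    (x₀ : X)
    (hMT : {x : X | ‖x‖ = 1 ∧ ‖T x‖ = ‖T‖} = {x₀, -x₀})
    (hrs : RightSymmetricCompactOp T) :
    LeftSymmetricPt x₀ := by
  obtain ⟨hx₀, hTx₀⟩ : x₀ ∈ {x : X | ‖x‖ = 1 ∧ ‖T x‖ = ‖T‖} := hMT ▸ Set.mem_insert x₀ _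
  have hx₀0 : x₀ ≠ 0 := norm_ne_zero_iff.1 (hx₀ ▸ one_ne_zero)
  intro y hxy
  by_contra hyx
  have hy : y ≠ 0 := by
    rintro rfl
    exact hyx (bjOrth_zero_left x₀)
  obtain ⟨g, hg, hgy⟩ := exists_dual_vector ℝ y (norm_ne_zero_iff.2 hy)
  have hgx₀ : g x₀ ≠ 0 := fun h => hyx (bjOrth_of_dual hg.le hgy h)
  have hTxy : BJOrth (T x₀) (T y) :=
    hxy.map_of_smoothPoint (hsmooth x₀ hx₀0) T hT.le (by rw [hTx₀, hT, hx₀])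
  set A : X →L[ℝ] X := g.smulRight (T x₀)
  have hAc : IsCompactOperator A := isCompactOperator_smulRight_s7 g (T x₀)
  have hAT : BJOrth A T := by
    refine bjOrth_of_bjOrth_apply hy ?_ (by simpa [A, hgy] using hTxy.smul_left_s7 ‖y‖)
    simp [A, hgy, norm_smul, ContinuousLinearMap.norm_smulRight_apply, hg, hTx₀, hT]
  have hTA := bjOrth_apply_of_normAttain_eq_pair hX hTc hAc hMT (hrs A hAc hAT)
  have hTx₀0 : T x₀ = 0 := eq_zero_of_bjOrth_smul_self hgx₀ (by simpa [A] using hTA)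
  simp [hTx₀0, hT] at hTx₀

/-- Let `X` be a smooth reflexive Banach space and `T : X → X` a norm-one compact
operator with `M_T = {x₀, -x₀}`. If `T` is a right-symmetric point of the space of compact
operators on `X`, then `x₀` is a left-symmetric point of `X`. -/
theorem leftSymmetric_of_rightSymmetric_smooth {X : Type*}
    [NormedAddCommGroup X] [NormedSpace ℝ X] [CompleteSpace X]
    (hX : ReflexiveSpace X)
    (hsmooth : ∀ x : X, x ≠ 0 → SmoothPoint x)
    (T : X →L[ℝ] X) (hTc : IsCompactOperator T) (hT : ‖T‖ = 1)
    (x₀ : X) (hx₀ : ‖x₀‖ = 1)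
    (hMT : {x : X | ‖x‖ = 1 ∧ ‖T x‖ = ‖T‖} = {x₀, -x₀})
    (hrs : RightSymmetricCompactOp T) :
    LeftSymmetricPt x₀ :=
  leftSymmetric_of_rightSymmetric_smooth_general hX hsmooth T hTc hT x₀ hMT hrs
end

section
/- Let X be a smooth reflexive real Banach space and let T be a compact linear operator from X to X with operator norm 1 that is a smooth point of the space of compact operators on X (with the operator norm). Then either the range of T is one-dimensional, or T is not a right-symmetric point of the space of compact operators on X. -/
/-- The subspace of `X →L[ℝ] Y` consisting of all compact operators, normed with the
(restricted) operator norm. -/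
noncomputable def compactOperators (X Y : Type*) [NormedAddCommGroup X] [NormedSpace ℝ X]
    [NormedAddCommGroup Y] [NormedSpace ℝ Y] : Submodule ℝ (X →L[ℝ] Y) where
  carrier := {T | IsCompactOperator T}
  add_mem' hf hg := hf.add hg
  zero_mem' := isCompactOperator_zero
  smul_mem' c _ hf := hf.smul c

/-!
Assume `T` is right-symmetric. Compactness and reflexivity make `T` attain its norm at some `x₀`.
If `g` norms `T x₀`, then `A ↦ g (A x₀)` norms `T` in the space of compact operators, and by
smoothness of `T` it is the only functional doing so. For `w` near `x₀` and `z ⊥_B T w`, the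
rank-one operator `ψ ⊗ z` (with `ψ` norming `w`) satisfies `ψ ⊗ z ⊥_B T`, hence `T ⊥_B ψ ⊗ z`,
which forces `g z = 0`. Consequently every `v ∈ ker g` is orthogonal to `T w` for all `w` near
`x₀`, so by smoothness of `X` the functional norming `v` vanishes on `T w` for `w` near `x₀`,
hence on the whole range of `T`. If `v` lies in that range this gives `v = 0`: the range of `T`
meets `ker g` only in `0`, so it is one-dimensional.
-/

open Metric Filter Topology

section BirkhoffJames

variable {E : Type*} [NormedAddCommGroup E] [NormedSpace ℝ E]

def IsNormingFunctional (f : StrongDual ℝ E) (x : E) : Prop :=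
  ‖f‖ = 1 ∧ f x = ‖x‖

theorem exists_isNormingFunctional {x : E} (hx : x ≠ 0) : ∃ f, IsNormingFunctional f x := by
  obtain ⟨f, hf, hfx⟩ := exists_dual_vector ℝ x (norm_ne_zero_iff.mpr hx)
  exact ⟨f, hf, by simpa using hfx⟩

theorem IsNormingFunctional.of_norm_le_one {f : StrongDual ℝ E} {x : E} (hx : x ≠ 0)
    (hf : ‖f‖ ≤ 1) (hfx : f x = ‖x‖) : IsNormingFunctional f x := by
  refine ⟨le_antisymm hf ?_, hfx⟩
  have := f.le_opNorm x
  rw [hfx, Real.norm_of_nonneg (norm_nonneg x)] at this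
  exact one_le_of_le_mul_right₀ (norm_pos_iff.mpr hx) (by simpa [mul_comm] using this)

theorem IsNormingFunctional.apply_pos_of_norm_sub_lt {f : StrongDual ℝ E} {x y : E}
    (hf : IsNormingFunctional f x) (hxy : ‖y - x‖ < ‖x‖) : 0 < f y := by
  have : |f (y - x)| ≤ ‖y - x‖ := by simpa [hf.1] using f.le_opNorm (y - x)
  rw [map_sub, hf.2] at this
  linarith [neg_abs_le (f y - ‖x‖)]

theorem IsNormingFunctional.apply_ne_zero {f : StrongDual ℝ E} {x : E}
    (hf : IsNormingFunctional f x) (hx : x ≠ 0) : f x ≠ 0 := by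
  rwa [hf.2, norm_ne_zero_iff]

theorem BJOrth.exists_isNormingFunctional {x y : E} (hx : x ≠ 0) (h : BJOrth x y) :
    ∃ f, IsNormingFunctional f x ∧ f y = 0 := by
  -- Orthogonality says exactly that `x` keeps its norm in `E ⧸ span {y}`; norm it there.
  set S := Submodule.span ℝ {y}
  have hnorm : ‖S.mkQ x‖ = ‖x‖ := by
    refine le_antisymm (Submodule.Quotient.norm_mk_le S x)
      (QuotientAddGroup.le_norm_iff.2 fun m hm => ?_)
    obtain ⟨t, ht⟩ := Submodule.mem_span_singleton.mp ((Submodule.Quotient.eq S).mp hm)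
    rw [show m = x + t • y by rw [ht]; abel]
    exact h t
  obtain ⟨g, hg1, hgx⟩ := exists_dual_vector ℝ (S.mkQ x) (by rwa [hnorm, norm_ne_zero_iff])
  have hmkQ : ‖S.mkQL‖ ≤ 1 :=
    ContinuousLinearMap.opNorm_le_bound _ zero_le_one fun z => by
      simpa using Submodule.Quotient.norm_mk_le S z
  refine ⟨g.comp S.mkQL, IsNormingFunctional.of_norm_le_one hx ?_ ?_, ?_⟩
  · calc ‖g.comp S.mkQL‖ ≤ ‖g‖ * ‖S.mkQL‖ := g.opNorm_comp_le _
      _ ≤ 1 := by rw [hg1, one_mul]; exact hmkQ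
  · rw [← hnorm]; simpa using hgx
  · simp [(Submodule.Quotient.mk_eq_zero S).mpr (Submodule.mem_span_singleton_self y)]

theorem SmoothPoint.ne_zero {x : E} (hx : SmoothPoint x) : x ≠ 0 := by
  rintro rfl
  obtain ⟨f, hf, huniq⟩ := hx
  have : -f = f := huniq (-f) ⟨by rw [norm_neg, hf.1], by simp⟩
  have hf0 : f = 0 := by simpa [neg_eq_iff_add_eq_zero, ← two_smul ℝ f] using this
  simpa [hf0] using hf.1

theorem SmoothPoint.apply_eq_zero_of_bjOrth_s9 {x y : E} {f : StrongDual ℝ E} (hx : SmoothPoint x)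
    (hf : IsNormingFunctional f x) (hxy : BJOrth x y) : f y = 0 := by
  obtain ⟨g, hg, hgy⟩ := hxy.exists_isNormingFunctional hx.ne_zero
  rwa [hx.unique hf hg]

theorem exists_bjOrth_add_smul (v u : E) : ∃ t : ℝ, BJOrth (v + t • u) u := by
  rcases eq_or_ne u 0 with rfl | hu
  · exact ⟨0, fun _ => by simp⟩
  have hcont : Continuous fun t : ℝ => ‖v + t • u‖ := by fun_prop
  have hcoercive : Tendsto (fun t : ℝ => ‖v + t • u‖) (cocompact ℝ) atTop := by
    refine tendsto_atTop_mono (fun t => ?_) (tendsto_atTop_add_const_right _ (-‖v‖)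
      ((tendsto_norm_cocompact_atTop).atTop_mul_const (norm_pos_iff.mpr hu)))
    have := norm_sub_norm_le (t • u) (-v)
    rw [norm_smul, norm_neg, sub_neg_eq_add, add_comm] at this
    linarith
  obtain ⟨t, ht⟩ := hcont.exists_forall_le hcoercive
  exact ⟨t, fun s => by simpa [add_assoc, ← add_smul] using ht (t + s)⟩

end BirkhoffJames

theorem continuous_of_forall_dual_comp {𝕜 E α : Type*} [RCLike 𝕜] [NormedAddCommGroup E]
    [NormedSpace 𝕜 E] [TopologicalSpace α] {F : α → E} {C : Set E} (hC : IsCompact C)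
    (hFC : ∀ a, F a ∈ C) (hF : ∀ f : StrongDual 𝕜 E, Continuous fun a => f (F a)) :
    Continuous F := by
  have : CompactSpace C := isCompact_iff_compactSpace.mp hC
  let e : C → StrongDual 𝕜 E → 𝕜 := fun c f => f c
  have he : Topology.IsClosedEmbedding e :=
    (continuous_pi fun f => f.continuous.comp continuous_subtype_val).isClosedEmbedding
      fun a b hab => Subtype.ext (SeparatingDual.eq_iff_forall_dual_eq.2 (congrFun hab))
  have : Continuous fun a => (⟨F a, hFC a⟩ : C) :=
    he.isEmbedding.continuous_iff.2 (continuous_pi hF)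
  exact continuous_subtype_val.comp this

section CompactOperators

variable {X Y : Type*} [NormedAddCommGroup X] [NormedSpace ℝ X]
  [NormedAddCommGroup Y] [NormedSpace ℝ Y]

theorem isCompactOperator_smulRight_s9 (ψ : StrongDual ℝ X) (z : Y) :
    IsCompactOperator (ψ.smulRight z) :=
  (isCompactOperator_of_locallyCompactSpace_dom ψ).clm_comp
    ((ContinuousLinearMap.id ℝ ℝ).smulRight z)

theorem IsCompactOperator.exists_norm_apply_eq_opNorm (hX : ReflexiveSpace X) {T : X →L[ℝ] Y}
    (hT : IsCompactOperator T) : ∃ x, ‖x‖ ≤ 1 ∧ ‖T x‖ = ‖T‖ := by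
  -- Maximise `‖T (J⁻¹ ξ)‖` over the weak-* compact unit ball of `X**`: this is weak-* continuous
  -- because its values stay in the norm-compact set `closure (T '' closedBall 0 1)`.
  let J := LinearIsometryEquiv.ofSurjective (NormedSpace.inclusionInDoubleDualLi ℝ) hX
  let B : Set (WeakDual ℝ (StrongDual ℝ X)) := WeakDual.toStrongDual ⁻¹' closedBall 0 1
  let F : WeakDual ℝ (StrongDual ℝ X) → Y := fun ξ => T (J.symm (WeakDual.toStrongDual ξ))
  have hB : ∀ ξ, ξ ∈ B ↔ ‖WeakDual.toStrongDual ξ‖ ≤ 1 := fun _ =>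
    mem_closedBall_zero_iff (E := StrongDual ℝ (StrongDual ℝ X))
  have hF : ContinuousOn F B := by
    refine continuousOn_iff_continuous_domRestrict.2 <| continuous_of_forall_dual_comp (𝕜 := ℝ)
      (hT.isCompact_closure_image_closedBall 1) (fun ξ => subset_closure ⟨_, ?_, rfl⟩) fun f => ?_
    · rw [mem_closedBall_zero_iff, J.symm.norm_map]
      exact (hB ξ).1 ξ.2
    · have hFξ : ∀ ξ, f (F ξ) = ξ (f.comp T) := fun ξ =>
        congrArg (· (f.comp T)) (J.apply_symm_apply (WeakDual.toStrongDual ξ))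
      exact ((WeakDual.eval_continuous (f.comp T)).comp continuous_subtype_val).congr
        fun ξ => (hFξ ξ).symm
  obtain ⟨ξ, hξB, hξmax⟩ := (WeakDual.isCompact_closedBall 0 1).exists_isMaxOn
    ⟨0, by simp⟩ hF.norm
  set x := J.symm (WeakDual.toStrongDual ξ)
  have hxB : x ∈ closedBall 0 1 := by
    rw [mem_closedBall_zero_iff, J.symm.norm_map]
    exact (hB ξ).1 hξB
  have hmax : IsGreatest ((fun y => ‖T y‖) '' closedBall 0 1) ‖T x‖ := by
    refine ⟨⟨x, hxB, rfl⟩, ?_⟩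
    rintro _ ⟨y, hy, rfl⟩
    have := hξmax (a := StrongDual.toWeakDual (J y)) ((hB _).2 (by simpa [J.norm_map] using hy))
    simpa [F, J.symm_apply_apply] using this
  exact ⟨x, mem_closedBall_zero_iff.1 hxB, T.sSup_unitClosedBall_eq_norm ▸ hmax.csSup_eq.symm⟩

end CompactOperators

theorem Submodule.finrank_eq_one_of_disjoint_ker {K V : Type*} [Field K] [AddCommGroup V]
    [Module K V] {p : Submodule K V} {g : V →ₗ[K] K} (hp : Disjoint p (LinearMap.ker g))
    {x : V} (hx : x ∈ p) (hgx : g x ≠ 0) : Module.finrank K p = 1 := by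
  have hinj : Function.Injective (g.domRestrict p) := LinearMap.injective_domRestrict_iff.2 hp
  have hsurj : Function.Surjective (g.domRestrict p) := fun c =>
    ⟨(c / g x) • ⟨x, hx⟩, by simp [div_mul_cancel₀ c hgx]⟩
  rw [(LinearEquiv.ofBijective _ ⟨hinj, hsurj⟩).finrank_eq, Module.finrank_self]

section RightSymmetric

variable {X Y : Type*} [NormedAddCommGroup X] [NormedSpace ℝ X]
  [NormedAddCommGroup Y] [NormedSpace ℝ Y]

theorem bjOrth_smulRight_of_bjOrth_apply_s9 {T : X →L[ℝ] Y} {w : X} {ψ : StrongDual ℝ X}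
    (hw : w ≠ 0) (hψ : IsNormingFunctional ψ w) {z : Y} (hz : BJOrth z (T w)) :
    BJOrth (ψ.smulRight z) T := by
  intro lam
  have hw' : 0 < ‖w‖ := norm_pos_iff.2 hw
  have happ : (ψ.smulRight z + lam • T) w = ‖w‖ • (z + (lam / ‖w‖) • T w) := by
    simp [hψ.2, smul_add, smul_smul, mul_div_cancel₀ _ hw'.ne']
  rw [ContinuousLinearMap.norm_smulRight_apply, hψ.1, one_mul]
  refine le_of_mul_le_mul_right ?_ hw'
  calc ‖z‖ * ‖w‖ ≤ ‖z + (lam / ‖w‖) • T w‖ * ‖w‖ := by gcongr; exact hz _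
    _ = ‖(ψ.smulRight z + lam • T) w‖ := by rw [happ, norm_smul, norm_norm, mul_comm]
    _ ≤ ‖ψ.smulRight z + lam • T‖ * ‖w‖ := ContinuousLinearMap.le_opNorm _ _

theorem exists_isNormingFunctional_compactOperators {T : X →L[ℝ] Y} (hTc : IsCompactOperator T)
    (hT : T ≠ 0) {x₀ : X} (hx₀ : ‖x₀‖ ≤ 1) (hTx₀ : ‖T x₀‖ = ‖T‖) {g : StrongDual ℝ Y}
    (hg : IsNormingFunctional g (T x₀)) :
    ∃ φ, IsNormingFunctional φ (⟨T, hTc⟩ : compactOperators X Y) ∧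
      ∀ A : compactOperators X Y, φ A = g (A.1 x₀) := by
  refine ⟨g.comp ((ContinuousLinearMap.apply ℝ Y x₀).comp (compactOperators X Y).subtypeL),
    .of_norm_le_one (fun h => hT (congrArg Subtype.val h)) ?_ (hg.2.trans hTx₀), fun _ => rfl⟩
  refine ContinuousLinearMap.opNorm_le_bound _ zero_le_one fun A => ?_
  calc ‖g (A.1 x₀)‖ ≤ ‖A.1 x₀‖ := by simpa [hg.1] using g.le_opNorm (A.1 x₀)
    _ ≤ 1 * ‖A‖ := by rw [one_mul]; exact A.1.unit_le_opNorm x₀ hx₀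

theorem ne_zero_of_smoothPoint_compactOperators {T : X →L[ℝ] Y} {hTc : IsCompactOperator T}
    (hTsm : SmoothPoint (⟨T, hTc⟩ : compactOperators X Y)) : T ≠ 0 :=
  fun h => hTsm.ne_zero (Subtype.ext h)

theorem apply_ne_zero_of_smoothPoint {T : X →L[ℝ] Y} {hTc : IsCompactOperator T}
    (hTsm : SmoothPoint (⟨T, hTc⟩ : compactOperators X Y)) {x₀ : X} (hTx₀ : ‖T x₀‖ = ‖T‖) :
    T x₀ ≠ 0 := by
  rw [← norm_ne_zero_iff, hTx₀, norm_ne_zero_iff]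
  exact ne_zero_of_smoothPoint_compactOperators hTsm

theorem RightSymmetricCompactOp.apply_eq_zero_of_bjOrth_apply {T : X →L[ℝ] Y}
    {hTc : IsCompactOperator T} (hsym : RightSymmetricCompactOp T)
    (hTsm : SmoothPoint (⟨T, hTc⟩ : compactOperators X Y)) {x₀ : X} (hx₀ : ‖x₀‖ ≤ 1)
    (hTx₀ : ‖T x₀‖ = ‖T‖) {g : StrongDual ℝ Y} (hg : IsNormingFunctional g (T x₀)) {w : X}
    (hw : ‖x₀ - w‖ < ‖w‖) {z : Y} (hz : BJOrth z (T w)) : g z = 0 := by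
  have hw₀ : w ≠ 0 := norm_pos_iff.1 ((norm_nonneg _).trans_lt hw)
  obtain ⟨ψ, hψ⟩ := exists_isNormingFunctional hw₀
  have hA := isCompactOperator_smulRight_s9 ψ z
  obtain ⟨φ, hφ, hφA⟩ := exists_isNormingFunctional_compactOperators hTc
    (ne_zero_of_smoothPoint_compactOperators hTsm) hx₀ hTx₀ hg
  have hφA₀ : φ ⟨_, hA⟩ = 0 :=
    hTsm.apply_eq_zero_of_bjOrth_s9 hφ (hsym _ hA (bjOrth_smulRight_of_bjOrth_apply_s9 hw₀ hψ hz))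
  rw [hφA, ContinuousLinearMap.smulRight_apply, map_smul, smul_eq_mul] at hφA₀
  exact (mul_eq_zero.1 hφA₀).resolve_left (hψ.apply_pos_of_norm_sub_lt hw).ne'

theorem RightSymmetricCompactOp.bjOrth_apply_of_apply_eq_zero {T : X →L[ℝ] Y}
    {hTc : IsCompactOperator T} (hsym : RightSymmetricCompactOp T)
    (hTsm : SmoothPoint (⟨T, hTc⟩ : compactOperators X Y)) {x₀ : X} (hx₀ : ‖x₀‖ ≤ 1)
    (hTx₀ : ‖T x₀‖ = ‖T‖) {g : StrongDual ℝ Y} (hg : IsNormingFunctional g (T x₀)) {w : X}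
    (hw : ‖x₀ - w‖ < ‖w‖) (hgw : g (T w) ≠ 0) {v : Y} (hv : g v = 0) : BJOrth v (T w) := by
  obtain ⟨t, ht⟩ := exists_bjOrth_add_smul v (T w)
  have hgt := hsym.apply_eq_zero_of_bjOrth_apply hTsm hx₀ hTx₀ hg hw ht
  rw [map_add, map_smul, hv, zero_add, smul_eq_mul] at hgt
  rwa [(mul_eq_zero.1 hgt).resolve_right hgw, zero_smul, add_zero] at ht

theorem RightSymmetricCompactOp.disjoint_range_ker (hY : ∀ y : Y, y ≠ 0 → SmoothPoint y)
    {T : X →L[ℝ] Y} {hTc : IsCompactOperator T} (hsym : RightSymmetricCompactOp T)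
    (hTsm : SmoothPoint (⟨T, hTc⟩ : compactOperators X Y)) {x₀ : X} (hx₀ : ‖x₀‖ ≤ 1)
    (hTx₀ : ‖T x₀‖ = ‖T‖) {g : StrongDual ℝ Y} (hg : IsNormingFunctional g (T x₀)) :
    Disjoint (LinearMap.range (T : X →ₗ[ℝ] Y)) (LinearMap.ker (g : Y →ₗ[ℝ] ℝ)) := by
  refine Submodule.disjoint_def.2 fun v ⟨y, hy⟩ hv => by_contra fun hv₀ => ?_
  obtain ⟨h, hh⟩ := exists_isNormingFunctional hv₀
  have hTx₀ne := apply_ne_zero_of_smoothPoint hTsm hTx₀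
  have hx₀ne : x₀ ≠ 0 := fun h => hTx₀ne (by rw [h, map_zero])
  have hnear : ∀ᶠ w in 𝓝 x₀, h (T w) = 0 := by
    have h₁ : ∀ᶠ w in 𝓝 x₀, ‖x₀ - w‖ < ‖w‖ :=
      ContinuousAt.eventually_lt (by fun_prop) (by fun_prop) (by simpa using hx₀ne)
    have h₂ : ∀ᶠ w in 𝓝 x₀, g (T w) ≠ 0 :=
      (g.continuous.comp T.continuous).continuousAt.eventually_ne (hg.apply_ne_zero hTx₀ne)
    filter_upwards [h₁, h₂] with w hw hgw
    exact (hY v hv₀).apply_eq_zero_of_bjOrth_s9 hh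
      (hsym.bjOrth_apply_of_apply_eq_zero hTsm hx₀ hTx₀ hg hw hgw hv)
  have hhT : (h.comp T : X →ₗ[ℝ] ℝ) = 0 := LinearMap.ker_eq_top.1 <|
    Submodule.eq_top_of_nonempty_interior' _ ⟨x₀, mem_interior_iff_mem_nhds.2 hnear⟩
  exact hh.apply_ne_zero hv₀ (hy ▸ LinearMap.congr_fun hhT y)

end RightSymmetric

theorem rankOne_or_not_rightSymmetric_of_smooth_operator_general {X : Type*}
    [NormedAddCommGroup X] [NormedSpace ℝ X]
    (hX : ReflexiveSpace X)
    (hsmooth : ∀ x : X, x ≠ 0 → SmoothPoint x)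
    (T : X →L[ℝ] X) (hTc : IsCompactOperator T)
    (hTsm : SmoothPoint (⟨T, hTc⟩ : compactOperators X X)) :
    Module.finrank ℝ (LinearMap.range (T : X →ₗ[ℝ] X)) = 1 ∨ ¬ RightSymmetricCompactOp T := by
  refine (not_or_of_imp fun (hsym : RightSymmetricCompactOp T) => ?_).symm
  obtain ⟨x₀, hx₀, hTx₀⟩ := hTc.exists_norm_apply_eq_opNorm hX
  have hTx₀ne := apply_ne_zero_of_smoothPoint hTsm hTx₀
  obtain ⟨g, hg⟩ := exists_isNormingFunctional hTx₀ne
  exact Submodule.finrank_eq_one_of_disjoint_ker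
    (hsym.disjoint_range_ker hsmooth hTsm hx₀ hTx₀ hg) ⟨x₀, rfl⟩ (hg.apply_ne_zero hTx₀ne)

/-- Let `X` be a smooth reflexive Banach space and `T : X → X` a norm-one compact
operator that is a smooth point of the space of compact operators on `X` (with the operator
norm). Then either the range of `T` is one-dimensional, or `T` is not a right-symmetric point
of the space of compact operators on `X`. -/
theorem rankOne_or_not_rightSymmetric_of_smooth_operator {X : Type*}
    [NormedAddCommGroup X] [NormedSpace ℝ X] [CompleteSpace X]
    (hX : ReflexiveSpace X)
    (hsmooth : ∀ x : X, x ≠ 0 → SmoothPoint x)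
    (T : X →L[ℝ] X) (hTc : IsCompactOperator T) (hT : ‖T‖ = 1)
    (hTsm : SmoothPoint (⟨T, hTc⟩ : compactOperators X X)) :
    Module.finrank ℝ (LinearMap.range (T : X →ₗ[ℝ] X)) = 1 ∨ ¬ RightSymmetricCompactOp T :=
  rankOne_or_not_rightSymmetric_of_smooth_operator_general hX hsmooth T hTc hTsm
end
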